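/- In the optimal unicast rate allocation, if receiver i has a larger effective level σ_{d_i}² 2^{-2 M_i} than receiver k (i.e., σ_{d_i}² 2^{-2 M_i} > σ_{d_k}² 2^{-2 M_k}), then the optimal rate satisfies R_i* ≥ R_k*; in particular receivers with worse current distortion receive at least as much rate. -/
import Mathlib


/-- In the optimal (water-filling) unicast rate allocation,
a receiver with a larger effective level `σ_{d_i}² 2^(-2 M_i)` receives at
least as much rate. -/
theorem stmt4 (n : ℕ) (σ2 M : Fin n → ℝ)
    (hσ : ∀ i, 0 < σ2 i) (hM : ∀ i, 0 ≤ M i)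
    (γ : ℝ) (hγ : 0 < γ) (Rstar : Fin n → ℝ)
    (hRstar : ∀ i, Rstar i
      = max 0 (Real.logb 2 (Real.sqrt (2 * Real.log 2 * σ2 i / γ)) - M i))
    (i k : Fin n)
    (h : σ2 i * (2 : ℝ) ^ (-2 * M i) > σ2 k * (2 : ℝ) ^ (-2 * M k)) :
    Rstar k ≤ Rstar i := by
  rw [hRstar i, hRstar k]
  have hlog2 : (0:ℝ) < Real.log 2 := Real.log_pos one_lt_two
  have h2l : (0:ℝ) < 2 * Real.log 2 := by positivity
  have hlogb : ∀ j : Fin n, Real.logb 2 (Real.sqrt (2 * Real.log 2 * σ2 j / γ))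
      = (Real.log 2 + Real.log (Real.log 2) + Real.log (σ2 j) - Real.log γ)
          / (2 * Real.log 2) := by
    intro j
    have hA : (0:ℝ) < 2 * Real.log 2 * σ2 j / γ := by
      have := hσ j; positivity
    rw [Real.logb, Real.log_sqrt hA.le, Real.log_div (by have := hσ j; positivity) hγ.ne',
        Real.log_mul (by positivity) (hσ j).ne', Real.log_mul two_ne_zero hlog2.ne']
    ring
  have hstar : Real.log (σ2 k) + (-2 * M k) * Real.log 2
      < Real.log (σ2 i) + (-2 * M i) * Real.log 2 := by
    have hl := Real.log_lt_log (by have := hσ k; positivity) h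
    rwa [Real.log_mul (hσ k).ne' (by positivity),
        Real.log_mul (hσ i).ne' (by positivity),
        Real.log_rpow two_pos, Real.log_rpow two_pos] at hl
  apply max_le_max le_rfl
  rw [hlogb i, hlogb k, sub_le_sub_iff, div_add' _ _ _ h2l.ne',
      div_add' _ _ _ h2l.ne', div_le_div_iff₀ h2l h2l]
  nlinarith [mul_le_mul_of_nonneg_right hstar.le h2l.le]
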